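/- arXiv:1303.3522 — 2 statements merged into one kernel-verified Lean document; each statement's English description precedes it below -/
import Mathlib

section
/- Suppose D_i ≠ 0 for every station i, and let (α, β) satisfy the balance equations Σ_{j≠i}(α_{ij}·h(r_i) - α_{ji}·h(r_j)) = D_i and Σ_{j≠i}(β_{ij}·h(r_i) - β_{ji}·h(r_j)) = -D_i for all i, where h(x) = 1 if x > 0 and 0 otherwise, α_{ij}, β_{ij} ≥ 0, and r : N → ℝ_{≥0}. Then r_i > 0 for every i. -/
open Finset

noncomputable def heaviside (x : ℝ) : ℝ := if 0 < x then 1 else 0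

theorem drivers_positive_at_equilibrium
    {N : Type*} [Fintype N] [DecidableEq N]
    (D : N → ℝ) (α β : N → N → ℝ) (r : N → ℝ)
    (hD : ∀ i, D i ≠ 0)
    (hα0 : ∀ i j, 0 ≤ α i j)
    (hβ0 : ∀ i j, 0 ≤ β i j)
    (hr0 : ∀ i, 0 ≤ r i)
    (hαbal : ∀ i, ∑ j ∈ univ.erase i,
        (α i j * heaviside (r i) - α j i * heaviside (r j)) = D i)
    (hβbal : ∀ i, ∑ j ∈ univ.erase i,
        (β i j * heaviside (r i) - β j i * heaviside (r j)) = -D i) :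
    ∀ i, 0 < r i := by
  intro i
  by_contra h
  have hhi : heaviside (r i) = 0 := by simp [heaviside, h]
  have hnn : ∀ x : ℝ, 0 ≤ heaviside x := by
    intro x; unfold heaviside; split <;> norm_num
  have hDle : D i ≤ 0 := by
    rw [← hαbal i]
    apply Finset.sum_nonpos
    intro j _
    rw [hhi]
    have := mul_nonneg (hα0 j i) (hnn (r j))
    linarith
  have hDge : -D i ≤ 0 := by
    rw [← hβbal i]
    apply Finset.sum_nonpos
    intro j _
    rw [hhi]
    have := mul_nonneg (hβ0 j i) (hnn (r j))
    linarith
  exact hD i (le_antisymm hDle (by linarith))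
end

section
/- Let c : [0,∞) → ℝ_{≥0} be an absolutely continuous function satisfying ċ(t) = (λ - μ)·h(c(t)) for almost every t, with λ < μ and h the Heaviside function. Then c(t) = 0 for all t ≥ c(0)/(μ - λ). -/
open MeasureTheory Set

lemma heaviside_nonneg (x : ℝ) : 0 ≤ heaviside x := by
  unfold heaviside; split <;> norm_num

lemma heaviside_le_one (x : ℝ) : heaviside x ≤ 1 := by
  unfold heaviside; split <;> norm_num

lemma f_nonpos (l m : ℝ) (hlm : l < m) (x : ℝ) : (l - m) * heaviside x ≤ 0 :=
  mul_nonpos_of_nonpos_of_nonneg (by linarith) (heaviside_nonneg x)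

lemma f_norm_le (l m : ℝ) (hlm : l < m) (x : ℝ) : ‖(l - m) * heaviside x‖ ≤ m - l := by
  rw [Real.norm_eq_abs, abs_mul, abs_of_nonpos (by linarith : l - m ≤ 0),
    abs_of_nonneg (heaviside_nonneg x)]
  nlinarith [heaviside_le_one x, heaviside_nonneg x]

lemma integrable_all (l m : ℝ) (hlm : l < m) (c : ℝ → ℝ)
    (hcAC : ∀ t, 0 ≤ t → c t = c 0 + ∫ s in (0:ℝ)..t, (l - m) * heaviside (c s)) :
    ∀ t, 0 ≤ t → IntegrableOn (fun s => (l - m) * heaviside (c s)) (Ioc 0 t) := by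
  set f : ℝ → ℝ := fun s => (l - m) * heaviside (c s) with hf
  by_contra hcon
  push_neg at hcon
  obtain ⟨t₀, ht₀, hni⟩ := hcon
  set S : Set ℝ := {t | 0 ≤ t ∧ IntegrableOn f (Ioc 0 t)} with hS
  have hS0 : (0:ℝ) ∈ S := ⟨le_rfl, by simp [IntegrableOn]⟩
  have hub : ∀ s ∈ S, s ≤ t₀ := by
    intro s hs
    by_contra hst
    push_neg at hst
    exact hni (hs.2.mono_set (Ioc_subset_Ioc_right hst.le))
  have hbdd : BddAbove S := ⟨t₀, hub⟩
  set τ := sSup S with hτ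
  have hτ0 : 0 ≤ τ := le_csSup hbdd hS0
  -- beyond τ, not integrable, hence c is constant
  have hconst : ∀ s, τ < s → c s = c 0 := by
    intro s hs
    have h0s : (0:ℝ) ≤ s := le_trans hτ0 hs.le
    have hnint : ¬ IntervalIntegrable f volume 0 s := by
      intro h
      have : s ∈ S := ⟨h0s, (intervalIntegrable_iff_integrableOn_Ioc_of_le h0s).mp h⟩
      exact absurd (le_csSup hbdd this) (not_le.2 hs)
    rw [hcAC s h0s, intervalIntegral.integral_undef hnint, add_zero]
  -- pieces: below τ
  have hseq : ∀ n : ℕ, IntegrableOn f (Ioc 0 (τ - τ / (n+1))) := by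
    intro n
    rcases eq_or_lt_of_le hτ0 with h | h
    · have : τ - τ / (n+1) = 0 := by rw [← h]; simp
      rw [this]; simp [IntegrableOn]
    · have h1 : τ - τ / (n+1) < τ := by
        have : 0 < τ / (n+1) := div_pos h (by positivity)
        linarith
      obtain ⟨s, hsS, hss⟩ := exists_lt_of_lt_csSup ⟨0, hS0⟩ h1
      exact hsS.2.mono_set (Ioc_subset_Ioc_right hss.le)
  have hmeas_lt : AEMeasurable f (volume.restrict (Ioo 0 τ)) := by
    have hsub : Ioo 0 τ ⊆ ⋃ n : ℕ, Ioc 0 (τ - τ / (n+1)) := by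
      intro x hx
      have hτpos : 0 < τ := lt_trans hx.1 hx.2
      have hd : 0 < τ - x := by linarith [hx.2]
      obtain ⟨n, hn⟩ := exists_nat_ge (τ / (τ - x))
      refine mem_iUnion.2 ⟨n, hx.1, ?_⟩
      have hn1 : τ / (τ - x) ≤ (n:ℝ) + 1 := le_trans hn (by linarith)
      have : τ ≤ ((n:ℝ)+1) * (τ - x) := by
        rw [div_le_iff₀ hd] at hn1; linarith
      have h2 : τ / ((n:ℝ)+1) ≤ τ - x := by
        rw [div_le_iff₀ (by positivity : (0:ℝ) < (n:ℝ)+1)]; linarith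
      linarith
    have : AEMeasurable f (volume.restrict (⋃ n : ℕ, Ioc 0 (τ - τ / (n+1)))) :=
      aemeasurable_iUnion_iff.2 fun n => (hseq n).aemeasurable
    exact this.mono_measure (Measure.restrict_mono hsub le_rfl)
  have hmeas_gt : AEMeasurable f (volume.restrict (Ioi τ)) := by
    refine (aemeasurable_const (b := (l - m) * heaviside (c 0))).congr ?_
    refine (ae_restrict_iff' measurableSet_Ioi).2 (ae_of_all _ fun x hx => ?_)
    simp [hf, hconst x hx]
  have hmeas_pt : AEMeasurable f (volume.restrict {τ}) := by
    have : volume.restrict ({τ} : Set ℝ) = 0 :=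
      Measure.restrict_eq_zero.2 (measure_singleton τ)
    rw [this]
    exact aemeasurable_zero_measure
  have hmeas : AEMeasurable f (volume.restrict (Ioc 0 t₀)) := by
    have hcover : Ioc 0 t₀ ⊆ (Ioo 0 τ ∪ {τ}) ∪ Ioi τ := by
      intro x hx
      rcases lt_trichotomy x τ with h | h | h
      · exact Or.inl (Or.inl ⟨hx.1, h⟩)
      · exact Or.inl (Or.inr h)
      · exact Or.inr h
    have h1 : AEMeasurable f (volume.restrict ((Ioo 0 τ ∪ {τ}) ∪ Ioi τ)) :=
      aemeasurable_union_iff.2 ⟨aemeasurable_union_iff.2 ⟨hmeas_lt, hmeas_pt⟩, hmeas_gt⟩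
    exact h1.mono_measure (Measure.restrict_mono hcover le_rfl)
  have : IntegrableOn f (Ioc 0 t₀) := by
    refine ⟨hmeas.aestronglyMeasurable, ?_⟩
    refine HasFiniteIntegral.restrict_of_bounded (C := m - l) ?_
      (ae_of_all _ fun x => f_norm_le l m hlm (c x))
    exact measure_Ioc_lt_top
  exact hni this

theorem queue_drains
    (l m : ℝ) (hl : 0 < l) (hlm : l < m)
    (c : ℝ → ℝ)
    (hc0 : ∀ t, 0 ≤ t → 0 ≤ c t)
    (hcAC : ∀ t, 0 ≤ t → c t = c 0 + ∫ s in (0:ℝ)..t, (l - m) * heaviside (c s)) :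
    ∀ t, c 0 / (m - l) ≤ t → c t = 0 := by
  intro t ht
  set f : ℝ → ℝ := fun s => (l - m) * heaviside (c s) with hf
  have hml : 0 < m - l := by linarith
  have hc00 : 0 ≤ c 0 := hc0 0 le_rfl
  have hT0 : 0 ≤ c 0 / (m - l) := div_nonneg hc00 hml.le
  have ht0 : 0 ≤ t := le_trans hT0 ht
  have hInt : IntervalIntegrable f volume 0 t :=
    (intervalIntegrable_iff_integrableOn_Ioc_of_le ht0).2
      (integrable_all l m hlm c hcAC t ht0)
  by_contra hne
  have hpos : 0 < c t := lt_of_le_of_ne (hc0 t ht0) (Ne.symm hne)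
  -- everywhere on [0, t], c is positive
  have hallpos : ∀ s ∈ Icc 0 t, 0 < c s := by
    intro s hs
    by_contra hcs
    push_neg at hcs
    have hcs0 : c s = 0 := le_antisymm hcs (hc0 s hs.1)
    have hI1 : IntervalIntegrable f volume 0 s :=
      hInt.mono_set (by rw [uIcc_of_le hs.1, uIcc_of_le ht0]; exact Icc_subset_Icc le_rfl hs.2)
    have hI2 : IntervalIntegrable f volume s t :=
      hInt.mono_set (by rw [uIcc_of_le hs.2, uIcc_of_le ht0]; exact Icc_subset_Icc hs.1 le_rfl)
    have hadd : (∫ u in (0:ℝ)..s, f u) + (∫ u in s..t, f u) = ∫ u in (0:ℝ)..t, f u :=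
      intervalIntegral.integral_add_adjacent_intervals hI1 hI2
    have hct : c t = c s + ∫ u in s..t, f u := by
      rw [hcAC t ht0, hcAC s hs.1, ← hadd]
      ring
    have hnp : (∫ u in s..t, f u) ≤ 0 := by
      have h1 : 0 ≤ ∫ u in s..t, -f u :=
        intervalIntegral.integral_nonneg_of_forall hs.2
          (fun u => neg_nonneg.2 (f_nonpos l m hlm (c u)))
      rw [intervalIntegral.integral_neg] at h1
      linarith
    rw [hcs0, zero_add] at hct
    linarith
  -- hence the integrand equals l - m on [0, t]
  have hcongr : ∫ u in (0:ℝ)..t, f u = ∫ u in (0:ℝ)..t, (l - m) := by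
    refine intervalIntegral.integral_congr ?_
    intro u hu
    rw [uIcc_of_le ht0] at hu
    have : heaviside (c u) = 1 := if_pos (hallpos u hu)
    simp [hf, this]
  have hval : c t = c 0 + (l - m) * t := by
    rw [hcAC t ht0, hcongr, intervalIntegral.integral_const]
    simp [smul_eq_mul]
    ring
  have hle : c 0 ≤ (m - l) * t := by
    rw [div_le_iff₀ hml] at ht
    linarith
  linarith
end
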